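/- arXiv:1802.01973 — 2 statements merged into one kernel-verified Lean document; each statement's English description precedes it below -/
import Mathlib

section
/- Let W ∈ L(H) be a positive operator, S ⊆ H a closed subspace, and T the shorted operator of W to S. Then T is also the shorted operator of W to the closed subspace ker T, i.e. T ∈ M(W, ker T) and X ≤ T for every X ∈ M(W, ker T). -/
open ContinuousLinearMap
open scoped ComplexInnerProductSpace

noncomputable section

variable {H : Type*} [NormedAddCommGroup H] [InnerProductSpace ℂ H] [CompleteSpace H]

/-- `M(W,S)`: the set of operators `X` with `0 ≤ X ≤ W` (Loewner order) and `range X ⊆ S^⊥`. -/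
def MSet (W : H →L[ℂ] H) (S : Submodule ℂ H) : Set (H →L[ℂ] H) :=
  {X | X.IsPositive ∧ (W - X).IsPositive ∧ LinearMap.range X.toLinearMap ≤ Sᗮ}

/-- `T` is the shorted operator of `W` to `S`, i.e. the maximum of `M(W,S)` in the Loewner
order. -/
def IsShorted (W : H →L[ℂ] H) (S : Submodule ℂ H) (T : H →L[ℂ] H) : Prop :=
  T ∈ MSet W S ∧ ∀ X ∈ MSet W S, (T - X).IsPositive

/-- The minus order: `A ⁻≤ B` iff there are bounded idempotents `P, Q` with `A = PB` and
`A* = QB*`. -/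
def MinusLE (A B : H →L[ℂ] H) : Prop :=
  ∃ P Q : H →L[ℂ] H, IsIdempotentElem P ∧ IsIdempotentElem Q ∧
    A = P ∘L B ∧ adjoint A = Q ∘L adjoint B

/-- The pair `(W, N)` is compatible: there is a bounded idempotent `Q` with range `N` such that
`WQ` is selfadjoint. -/
def Compatible (W : H →L[ℂ] H) (N : Submodule ℂ H) : Prop :=
  ∃ Q : H →L[ℂ] H, IsIdempotentElem Q ∧ LinearMap.range Q.toLinearMap = N ∧ IsSelfAdjoint (W ∘L Q)

/-- `M⁻(W,S)`: operators `X` with `X ⁻≤ W`, `range X ⊆ S^⊥` and `range X* ⊆ S^⊥`. -/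
def MMinusSet (W : H →L[ℂ] H) (S : Submodule ℂ H) : Set (H →L[ℂ] H) :=
  {X | MinusLE X W ∧ LinearMap.range X.toLinearMap ≤ Sᗮ ∧ LinearMap.range (adjoint X).toLinearMap ≤ Sᗮ}

/-- `X₀` is a `W`-inverse of `M` in `R(C)`: for every `x`, `X₀ x` is a `W`-weighted least squares
solution of `M z = C x`. -/
def WInverseIn (W M C X₀ : H →L[ℂ] H) : Prop :=
  ∀ x z : H, (⟪W (M (X₀ x) - C x), M (X₀ x) - C x⟫).re ≤ (⟪W (M z - C x), M z - C x⟫).re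

/-- The left weighted star order `A ₋*_W≤ B`. -/
def LStarW (W A B : H →L[ℂ] H) : Prop :=
  LinearMap.range B.toLinearMap = LinearMap.range A.toLinearMap ⊔ LinearMap.range (B - A).toLinearMap ∧
  LinearMap.range A.toLinearMap ⊓ LinearMap.range (B - A).toLinearMap = ⊥ ∧
  LinearMap.range (B - A).toLinearMap ≤ LinearMap.ker (adjoint A ∘L W).toLinearMap

/-- The right weighted star order `A ≤*_W B`. -/
def RStarW (W A B : H →L[ℂ] H) : Prop :=
  LinearMap.range (adjoint B).toLinearMap =
    LinearMap.range (adjoint A).toLinearMap ⊔ LinearMap.range (adjoint B - adjoint A).toLinearMap ∧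
  LinearMap.range (adjoint A).toLinearMap ⊓ LinearMap.range (adjoint B - adjoint A).toLinearMap = ⊥ ∧
  LinearMap.range (adjoint B - adjoint A).toLinearMap ≤ LinearMap.ker (A ∘L W).toLinearMap

/-- The weighted star order `A *_W≤ B`. -/
def StarW (W A B : H →L[ℂ] H) : Prop :=
  LStarW W A B ∧ RStarW W A B

/-!
A positive operator `T` with `range T ⊆ Sᗮ` satisfies `⟪T s, s⟫ = 0` on `S`, hence (writing
`T = R*R` with `R = √T`) it vanishes on `S`. So `S ⊆ ker T`, which makes `M(W, ker T) ⊆ M(W, S)`;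
and `T ∈ M(W, ker T)` because a selfadjoint operator has range inside `(ker T)ᗮ`.
-/

theorem ContinuousLinearMap.IsPositive.apply_eq_zero_of_inner_self_eq_zero {T : H →L[ℂ] H}
    (hT : T.IsPositive) {x : H} (hx : ⟪T x, x⟫ = 0) : T x = 0 := by
  set R := CFC.sqrt T
  have hRR : R * R = T := CFC.sqrt_mul_sqrt_self T ((nonneg_iff_isPositive T).mpr hT)
  have hR : adjoint R = R := (IsSelfAdjoint.of_nonneg (CFC.sqrt_nonneg T)).adjoint_eq
  have hRx : R x = 0 := by
    rw [← inner_self_eq_zero (𝕜 := ℂ), ← adjoint_inner_left, hR, ← hx, ← hRR]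
    rfl
  rw [← hRR]
  change R (R x) = 0
  rw [hRx, map_zero]

theorem ContinuousLinearMap.IsPositive.le_ker_of_range_le_orthogonal {T : H →L[ℂ] H}
    (hT : T.IsPositive) {S : Submodule ℂ H} (hTS : LinearMap.range T.toLinearMap ≤ Sᗮ) :
    S ≤ LinearMap.ker T.toLinearMap := by
  intro s hs
  have hsTs : ⟪s, T s⟫ = 0 := Submodule.inner_right_of_mem_orthogonal hs (hTS ⟨s, rfl⟩)
  exact hT.apply_eq_zero_of_inner_self_eq_zero (by rw [← inner_conj_symm, hsTs, map_zero])

theorem MSet_anti {E : Type*} [NormedAddCommGroup E] [InnerProductSpace ℂ E] (W : E →L[ℂ] E)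
    {S S' : Submodule ℂ E} (h : S ≤ S') : MSet W S' ⊆ MSet W S :=
  fun _ ⟨hX, hWX, hXS'⟩ => ⟨hX, hWX, hXS'.trans (Submodule.orthogonal_le h)⟩

theorem IsShorted.le_ker {W T : H →L[ℂ] H} {S : Submodule ℂ H} (hT : IsShorted W S T) :
    S ≤ LinearMap.ker T.toLinearMap :=
  hT.1.1.le_ker_of_range_le_orthogonal hT.1.2.2

theorem stmt1_general (W T : H →L[ℂ] H) (S : Submodule ℂ H) (hT : IsShorted W S T) :
    IsShorted W (LinearMap.ker T.toLinearMap) T := by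
  have hSker := hT.le_ker
  obtain ⟨⟨hT₀, hWT, -⟩, hmax⟩ := hT
  have hrange : LinearMap.range T.toLinearMap ≤ (LinearMap.ker T.toLinearMap)ᗮ :=
    hT₀.isSymmetric.orthogonal_range ▸ Submodule.le_orthogonal_orthogonal _
  exact ⟨⟨hT₀, hWT, hrange⟩, fun X hX => hmax X (MSet_anti W hSker hX)⟩

/-- the shorted operator of `W` to `S` is also the shorted operator of `W` to
`ker T`. -/
theorem stmt1 (W T : H →L[ℂ] H) (S : Submodule ℂ H) (hS : IsClosed (S : Set H))
    (hW : W.IsPositive) (hT : IsShorted W S T) :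
    IsShorted W (LinearMap.ker T.toLinearMap) T :=
  stmt1_general W T S hT
end
end

section
/- Let W ∈ L(H) be a positive operator, A, B ∈ L(H) such that range(A + B) is closed, the pair (W, range(A + B)) is compatible, and A ₋*_W≤ A + B, and let C ∈ L(H). Then, for X₀ ∈ L(H): X₀ is a W-inverse of A + B in R(C) if and only if X₀ is a W-inverse of A in R(C) and a W-inverse of B in R(C). -/
/-!
`X₀ x` is a `W`-least-squares solution of `M z = C x` exactly when the weighted residual
`W (M (X₀ x) - C x)` is orthogonal to `range M`. The order `A ₋*_W≤ A + B` gives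
`range (A + B) = range A ⊔ range B` and makes the values of `W B` orthogonal to `range A`, hence,
`W` being selfadjoint, those of `W A` orthogonal to `range B`. So the normal equation of `A + B`
tested against `range A` (resp. `range B`) is that of `A` (resp. `B`) up to a vanishing term.
-/

open ContinuousLinearMap
open scoped ComplexInnerProductSpace

noncomputable section

variable {H : Type*} [NormedAddCommGroup H] [InnerProductSpace ℂ H] [CompleteSpace H]

section

variable {E : Type*} [NormedAddCommGroup E] [InnerProductSpace ℂ E]

theorem LinearMap.IsSymmetric.reApplyInnerSelf_add {W : E →L[ℂ] E}
    (hW : (W : E →ₗ[ℂ] E).IsSymmetric) (r y : E) :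
    W.reApplyInnerSelf (r + y) =
      W.reApplyInnerSelf r + 2 * (⟪W r, y⟫).re + W.reApplyInnerSelf y := by
  have hsymm : (⟪W y, r⟫).re = (⟪W r, y⟫).re := by
    rw [show ⟪W y, r⟫ = ⟪y, W r⟫ from hW y r, ← inner_conj_symm, Complex.conj_re]
  simp only [reApplyInnerSelf_apply, RCLike.re_to_complex, map_add, inner_add_left,
    inner_add_right]
  linarith

theorem ContinuousLinearMap.IsPositive.forall_reApplyInnerSelf_le_add_iff {W : E →L[ℂ] E}
    (hW : W.IsPositive) (V : Submodule ℂ E) (r : E) :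
    (∀ y ∈ V, W.reApplyInnerSelf r ≤ W.reApplyInnerSelf (r + y)) ↔ W r ∈ Vᗮ := by
  have expand := hW.isSymmetric.reApplyInnerSelf_add r
  constructor
  · intro h
    -- `t ↦ 2 t re ⟪W r, y⟫ + t² re ⟪W y, y⟫` is nonnegative on `ℝ`, so its linear coefficient
    -- vanishes; the same for `I • y` in place of `y` kills the imaginary part
    have hre : ∀ y ∈ V, (⟪W r, y⟫).re = 0 := by
      intro y hy
      have hquad : ∀ t : ℝ,
          0 ≤ W.reApplyInnerSelf y * (t * t) + 2 * (⟪W r, y⟫).re * t + 0 := by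
        intro t
        have := h ((t : ℂ) • y) (V.smul_mem _ hy)
        rw [expand, reApplyInnerSelf_smul, inner_smul_right, Complex.re_ofReal_mul,
          Complex.norm_real, Real.norm_eq_abs, sq_abs] at this
        nlinarith
      have := discrim_le_zero hquad
      rw [discrim] at this
      nlinarith [sq_nonneg (⟪W r, y⟫).re]
    rw [Submodule.mem_orthogonal']
    intro y hy
    apply Complex.ext
    · exact hre y hy
    · simpa [inner_smul_right] using hre (Complex.I • y) (V.smul_mem _ hy)
  · intro h y hy
    rw [expand, (Submodule.mem_orthogonal' V _).mp h y hy, Complex.zero_re]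
    linarith [hW.2 y]

theorem wInverseIn_iff {W : E →L[ℂ] E} (hW : W.IsPositive) (M C X₀ : E →L[ℂ] E) :
    WInverseIn W M C X₀ ↔
      ∀ x, W (M (X₀ x) - C x) ∈ (LinearMap.range M.toLinearMap)ᗮ := by
  refine forall_congr' fun x => ?_
  rw [← hW.forall_reApplyInnerSelf_le_add_iff]
  constructor
  · rintro h _ ⟨u, rfl⟩
    have hshift : M (X₀ x + u) - C x = M (X₀ x) - C x + M u := by
      rw [map_add, add_sub_right_comm]
    exact hshift ▸ h (X₀ x + u)
  · intro h z
    have hshift : M (X₀ x) - C x + M (z - X₀ x) = M z - C x := by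
      rw [map_sub]
      abel
    exact hshift ▸ h _ ⟨z - X₀ x, rfl⟩

end

namespace LStarW

variable {W A B : H →L[ℂ] H}

theorem range_add_eq_sup (h : LStarW W A (A + B)) :
    LinearMap.range (A + B).toLinearMap =
      LinearMap.range A.toLinearMap ⊔ LinearMap.range B.toLinearMap := by
  simpa using h.1

theorem apply_right_mem_orthogonal_range_left (h : LStarW W A (A + B)) (u : H) :
    W (B u) ∈ (LinearMap.range A.toLinearMap)ᗮ := by
  have hker : adjoint A (W (B u)) = 0 := by
    simpa using h.2.2 ⟨u, rfl⟩
  rw [Submodule.mem_orthogonal]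
  rintro _ ⟨v, rfl⟩
  rw [coe_coe, ← adjoint_inner_right, hker, inner_zero_right]

theorem apply_left_mem_orthogonal_range_right (hW : W.IsPositive) (h : LStarW W A (A + B))
    (u : H) : W (A u) ∈ (LinearMap.range B.toLinearMap)ᗮ := by
  rw [Submodule.mem_orthogonal]
  rintro _ ⟨v, rfl⟩
  rw [coe_coe, ← inner_conj_symm, hW.inner_left_eq_inner_right,
    Submodule.inner_right_of_mem_orthogonal (u := A u)
      (LinearMap.mem_range_self A.toLinearMap u)
      (h.apply_right_mem_orthogonal_range_left v), map_zero]

end LStarW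

theorem stmt16_general (W A B C X₀ : H →L[ℂ] H) (hW : W.IsPositive)
    (hlw : LStarW W A (A + B)) :
    WInverseIn W (A + B) C X₀ ↔ WInverseIn W A C X₀ ∧ WInverseIn W B C X₀ := by
  simp only [wInverseIn_iff hW, hlw.range_add_eq_sup, ← Submodule.inf_orthogonal,
    Submodule.mem_inf, ← forall_and]
  refine forall_congr' fun x => and_congr ?_ ?_
  · have hsplit : W ((A + B) (X₀ x) - C x) = W (A (X₀ x) - C x) + W (B (X₀ x)) := by
      rw [← map_add, add_apply, add_sub_right_comm]
    rw [hsplit, Submodule.add_mem_iff_left _ (hlw.apply_right_mem_orthogonal_range_left _)]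
  · have hsplit : W ((A + B) (X₀ x) - C x) = W (B (X₀ x) - C x) + W (A (X₀ x)) := by
      rw [← map_add, add_apply, add_comm (A _), add_sub_right_comm]
    rw [hsplit, Submodule.add_mem_iff_left _ (hlw.apply_left_mem_orthogonal_range_right hW _)]

/-- if `range (A+B)` is closed, `(W, range (A+B))` is compatible and
`A ₋*_W≤ A + B`, then `X₀` is a `W`-inverse of `A + B` in `R(C)` iff it is a `W`-inverse of
`A` in `R(C)` and of `B` in `R(C)`. -/
theorem stmt16 (W A B C X₀ : H →L[ℂ] H) (hW : W.IsPositive)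
    (hAB : IsClosed (LinearMap.range (A + B).toLinearMap : Set H))
    (hcomp : Compatible W (LinearMap.range (A + B).toLinearMap))
    (hlw : LStarW W A (A + B)) :
    WInverseIn W (A + B) C X₀ ↔ WInverseIn W A C X₀ ∧ WInverseIn W B C X₀ :=
  stmt16_general W A B C X₀ hW hlw
end
end
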